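/- For any dual pair (C, C*) of n-ary generalized connectives and atoms A₁,…,Aₙ, the sequent ⊢ C(A₁,…,Aₙ), C*(~A₁,…,~Aₙ) is provable in MLL(C, C*) if and only if C = ⊗^n (i.e., P_C is the partition set {{(1),(2),…,(n)}} of all singletons) or C = ⅋^n (i.e., P_C is the partition set {{(1,…,n)}} whose single partition has one class). -/

import Mathlib

/-! ## Partitions of `{1,…,n}`, meeting graphs, orthogonality (Danos–Regnier) -/

/-- A partition of `{1,…,n}`, represented as a `Finpartition` of `Fin n`. -/
abbrev Partition' (n : ℕ) := Finpartition (Finset.univ : Finset (Fin n))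

/-- The (simple graph underlying the) meeting graph `G(p,q)` of two partitions of `{1,…,n}`:
its vertices are the classes of `p` together with the classes of `q`, and a class of `p` is
adjacent to a class of `q` iff some `i ∈ {1,…,n}` belongs to both (in the meeting multigraph
there is one edge for each such `i`). -/
def meetingGraph {n : ℕ} (p q : Partition' n) :
    SimpleGraph ({c // c ∈ p.parts} ⊕ {d // d ∈ q.parts}) :=
  SimpleGraph.fromRel fun a b =>
    ∃ (c : {c // c ∈ p.parts}) (d : {d // d ∈ q.parts}),
      ((c : Finset (Fin n)) ∩ (d : Finset (Fin n))).Nonempty ∧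
      a = Sum.inl c ∧ b = Sum.inr d

/-- `p ⊥ q` : the meeting multigraph `G(p,q)` is connected and acyclic.  The meeting
multigraph has exactly `n` edges (one per element of `{1,…,n}`), and a connected multigraph
is acyclic iff its number of edges is exactly one less than its number of vertices; so
`G(p,q)` is connected and acyclic iff it is connected (equivalently, the underlying simple
graph is connected) and `n + 1 = (#classes of p) + (#classes of q)`. -/
def Finpartition.Orthogonal {n : ℕ} (p q : Partition' n) : Prop :=
  (meetingGraph p q).Connected ∧ n + 1 = p.parts.card + q.parts.card

/-- Orthogonality of two partition sets: `P ⊥ Q` iff `p ⊥ q` for all `p ∈ P`, `q ∈ Q`. -/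
def orthSet {n : ℕ} (P Q : Set (Partition' n)) : Prop :=
  ∀ p ∈ P, ∀ q ∈ Q, p.Orthogonal q

/-- `P^⊥`, the maximal partition set orthogonal to `P`. -/
def orthCompl {n : ℕ} (P : Set (Partition' n)) : Set (Partition' n) :=
  {q | ∀ p ∈ P, p.Orthogonal q}

/-- The partition set of `⊗ⁿ` : the single partition of `{1,…,n}` into singleton classes. -/
def IsTensorSet {n : ℕ} (R : Set (Partition' n)) : Prop :=
  R = {p : Partition' n | ∀ c ∈ p.parts, c.card = 1}

/-- The partition set of `⅋ⁿ` : the single partition of `{1,…,n}` with one class. -/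
def IsParSet {n : ℕ} (R : Set (Partition' n)) : Prop :=
  R = {p : Partition' n | p.parts = {Finset.univ}}

/-! ## Generalized multiplicative connectives and the sequent calculus `MLL(Cᵢ)` -/

/-- An `n`-ary generalized (multiplicative) connective `C` together with its dual `C*`:
a pair of nonempty finite partition sets of `{1,…,n}` with `(P_C)^⊥ = P_{C*}` and
`(P_{C*})^⊥ = P_C`.  `rules` is the partition set of the introduction (right) rules of
`C`, and `dualRules` the one of its dual `C*`. -/
structure GenConn : Type where
  arity : ℕ
  rules : Set (Partition' arity)
  dualRules : Set (Partition' arity)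
  rules_nonempty : rules.Nonempty
  rules_finite : rules.Finite
  dualRules_nonempty : dualRules.Nonempty
  dualRules_finite : dualRules.Finite
  orth : orthCompl rules = dualRules
  orth' : orthCompl dualRules = rules

/-- Formulas of `MLL(Cᵢ)`: built from atoms `P` and their duals `~P` by `⊗`, `⅋` and the
generalized connectives `Cᵢ` (with constructor `conn i`) and their duals `Cᵢ*` (with
constructor `dconn i`), where `i` ranges over a signature `I` and `Csig i` records the
arity and the partition sets of `Cᵢ`. -/
inductive Formula (I : Type) (Csig : I → GenConn) : Type
  | pos : ℕ → Formula I Csig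
  | neg : ℕ → Formula I Csig
  | tens : Formula I Csig → Formula I Csig → Formula I Csig
  | parr : Formula I Csig → Formula I Csig → Formula I Csig
  | conn : (i : I) → (Fin (Csig i).arity → Formula I Csig) → Formula I Csig
  | dconn : (i : I) → (Fin (Csig i).arity → Formula I Csig) → Formula I Csig

/-- The dual `~A` of a formula, extended by De Morgan and
`~(Cᵢ(A₁,…,Aₘ)) = Cᵢ*(~A₁,…,~Aₘ)`. -/
def Formula.dual {I : Type} {Csig : I → GenConn} : Formula I Csig → Formula I Csig
  | .pos m => .neg m
  | .neg m => .pos m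
  | .tens A B => .parr A.dual B.dual
  | .parr A B => .tens A.dual B.dual
  | .conn i A => .dconn i fun k => (A k).dual
  | .dconn i A => .conn i fun k => (A k).dual

/-- Provability in the one-sided sequent calculus `MLL(Cᵢ)` (sequents are multisets of
formulas).  The rules are the axiom `⊢ P, ~P` for atomic `P`, the cut rule (allowed only
when `cutEnabled = true`), the `⊗`- and `⅋`-rules of MLL, and, for each generalized
connective `Cᵢ` and each partition `p ∈ P_{Cᵢ}` with classes `c`, the introduction rule
with premises `⊢ Γ_c, A_{c₁},…,A_{cₘ}` (one for each class `c` of `p`) and conclusion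
`⊢ Γ₁,…,Γ_k, Cᵢ(A₁,…,Aₘ)`; dually for `Cᵢ*` using `p ∈ P_{Cᵢ*}`. -/
inductive Provable {I : Type} {Csig : I → GenConn} (cutEnabled : Bool) :
    Multiset (Formula I Csig) → Prop
  | ax (m : ℕ) : Provable cutEnabled {Formula.pos m, Formula.neg m}
  | cut (A : Formula I Csig) (Γ Δ : Multiset (Formula I Csig)) (hcut : cutEnabled = true) :
      Provable cutEnabled (A ::ₘ Γ) → Provable cutEnabled (A.dual ::ₘ Δ) →
      Provable cutEnabled (Γ + Δ)
  | tens (A B : Formula I Csig) (Γ Δ : Multiset (Formula I Csig)) :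
      Provable cutEnabled (A ::ₘ Γ) → Provable cutEnabled (B ::ₘ Δ) →
      Provable cutEnabled (Formula.tens A B ::ₘ (Γ + Δ))
  | parr (A B : Formula I Csig) (Γ : Multiset (Formula I Csig)) :
      Provable cutEnabled (A ::ₘ B ::ₘ Γ) →
      Provable cutEnabled (Formula.parr A B ::ₘ Γ)
  | conn (i : I) (A : Fin (Csig i).arity → Formula I Csig)
      (p : Partition' (Csig i).arity) (hp : p ∈ (Csig i).rules)
      (Γ : {c // c ∈ p.parts} → Multiset (Formula I Csig)) :
      (∀ c : {c // c ∈ p.parts},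
        Provable cutEnabled (Γ c + Multiset.map A (c : Finset (Fin (Csig i).arity)).val)) →
      Provable cutEnabled (Formula.conn i A ::ₘ ∑ c : {c // c ∈ p.parts}, Γ c)
  | dconn (i : I) (A : Fin (Csig i).arity → Formula I Csig)
      (p : Partition' (Csig i).arity) (hp : p ∈ (Csig i).dualRules)
      (Γ : {c // c ∈ p.parts} → Multiset (Formula I Csig)) :
      (∀ c : {c // c ∈ p.parts},
        Provable cutEnabled (Γ c + Multiset.map A (c : Finset (Fin (Csig i).arity)).val)) →
      Provable cutEnabled (Formula.dconn i A ::ₘ ∑ c : {c // c ∈ p.parts}, Γ c)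

open scoped Pointwise

/-!
(⇐) is η-expansion. If `P_C` is the one-class partition, orthogonality makes `P_{C*}` the
partition into singletons, and a `C`-rule above a `C*`-rule above the axioms `⊢ Aₖ, ~Aₖ` proves
the sequent; dually for `⊗ⁿ`.

(⇒) goes through cut elimination, proved semantically in Okada's phase model whose pole is the
set of cut-free provable sequents. Soundness of cut needs `C*(~A)` to be interpreted inside the
orthogonal of `C(A)`, which comes down to orthogonality of `P_C` and `P_{C*}`: the meeting graph of
two orthogonal partitions is a tree, and contracting its edges one at a time combines the premises
pairwise. In a cut-free proof
of `⊢ C(A), C*(~A)` the last rule introduces, say, `C` with a partition `p`, and `C*(~A)` goes to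
the context of one premise; every other premise would consist of positive atoms only, which has
no cut-free proof. So `p` has a single class, and orthogonality then forces `P_C = ⅋ⁿ`
(symmetrically `P_C = ⊗ⁿ` when the last rule introduces `C*`).
-/

namespace Finpartition

variable {α : Type*} [DecidableEq α] {s : Finset α}

theorem card_parts_eq_card_iff (P : Finpartition s) :
    P.parts.card = s.card ↔ ∀ c ∈ P.parts, c.card = 1 := by
  rw [← P.sum_card_parts, Finset.card_eq_sum_ones,
    Finset.sum_eq_sum_iff_of_le fun c hc => Finset.card_pos.2 (P.nonempty_of_mem_parts hc)]
  exact forall₂_congr fun _ _ => eq_comm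

theorem parts_eq_singleton_of_card_parts_eq_one {P : Finpartition s} (h : P.parts.card = 1) :
    P.parts = {s} := by
  obtain ⟨t, ht⟩ := Finset.card_eq_one.1 h
  have hsup := P.sup_parts
  rw [ht, Finset.sup_singleton, id] at hsup
  rw [ht, hsup]

theorem sum_val_parts (P : Finpartition s) : ∑ c ∈ P.parts, c.val = s.val := by
  conv_rhs => rw [← P.biUnion_parts, ← P.parts.disjiUnion_eq_biUnion id P.disjoint,
    Finset.disjiUnion_val]
  rfl

theorem sum_map_val_parts {β : Type*} (P : Finpartition s) (f : α → β) :
    ∑ c : {c // c ∈ P.parts}, c.1.val.map f = s.val.map f := by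
  rw [Finset.sum_coe_sort P.parts (fun c => c.val.map f), ← P.sum_val_parts]
  exact (map_sum (Multiset.mapAddMonoidHom f) _ _).symm

end Finpartition

theorem Fintype.card_eq_one_of_sum_eq_singleton {ι α : Type*} [Fintype ι] {Γ : ι → Multiset α}
    {F : α} (hΓ : ∑ i, Γ i = {F}) (hne : ∀ i, Γ i ≠ 0) : Fintype.card ι = 1 := by
  have hsum : ∑ i, Multiset.card (Γ i) = 1 := by simpa using congrArg Multiset.card hΓ
  have hle : Fintype.card ι • 1 ≤ ∑ i, Multiset.card (Γ i) :=
    Finset.card_nsmul_le_sum _ _ _ fun i _ => Multiset.card_pos.2 (hne i)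
  obtain ⟨i, -, -⟩ := Finset.exists_ne_zero_of_sum_ne_zero (hsum ▸ one_ne_zero)
  have := Fintype.card_pos_iff.2 ⟨i⟩
  rw [smul_eq_mul, mul_one] at hle
  omega

theorem Relation.ReflTransGen.exists_ne {α : Type*} {r : α → α → Prop} {a b : α}
    (h : Relation.ReflTransGen r a b) (hab : a ≠ b) : ∃ c d, r c d ∧ c ≠ d := by
  induction h with
  | refl => exact absurd rfl hab
  | @tail b c _ hbc ih =>
    by_cases hbc' : b = c
    · exact ih (hbc' ▸ hab)
    · exact ⟨b, c, hbc, hbc'⟩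

theorem Finset.sum_filter_eq_add_sum_filter_erase {η V N : Type*} [DecidableEq η]
    [DecidableEq V] [AddCommMonoid N] {H : Finset η} {e : η → V} {i : η} {v : V} (hi : i ∈ H)
    (hv : e i = v) (f : η → N) :
    ∑ h ∈ H with e h = v, f h = f i + ∑ h ∈ H.erase i with e h = v, f h := by
  rw [filter_erase]
  exact (add_sum_erase (H.filter (e · = v)) f (mem_filter.2 ⟨hi, hv⟩)).symm

section MeetingGraph

variable {n : ℕ}

def meetingGraphComm (p q : Partition' n) : meetingGraph p q ≃g meetingGraph q p where
  toEquiv := Equiv.sumComm _ _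
  map_rel_iff' := by
    rintro (a | a) (b | b) <;> simp [meetingGraph, Finset.inter_comm]

theorem meetingGraph_connected_of_parts_eq_univ {p : Partition' n} (q : Partition' n)
    (hp : p.parts = {Finset.univ}) : (meetingGraph p q).Connected := by
  have hu : Finset.univ ∈ p.parts := by simp [hp]
  have hreach : ∀ v, (meetingGraph p q).Reachable v (.inl ⟨_, hu⟩) := by
    rintro (⟨c, hc⟩ | ⟨d, hd⟩)
    · obtain rfl : c = Finset.univ := by simpa [hp] using hc
      rfl
    · refine SimpleGraph.Adj.reachable ?_
      simp only [meetingGraph, SimpleGraph.fromRel_adj]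
      exact ⟨Sum.inr_ne_inl,
        .inr ⟨_, ⟨d, hd⟩, by simpa using q.nonempty_of_mem_parts hd, rfl, rfl⟩⟩
  have : Nonempty ({c // c ∈ p.parts} ⊕ {d // d ∈ q.parts}) := ⟨.inl ⟨_, hu⟩⟩
  exact ⟨fun v w => (hreach v).trans (hreach w).symm⟩

end MeetingGraph

namespace Finpartition

variable {n : ℕ} {p q : Partition' n}

theorem Orthogonal.symm (h : p.Orthogonal q) : q.Orthogonal p :=
  ⟨(meetingGraphComm p q).connected_iff.1 h.1, by rw [h.2, add_comm]⟩

theorem orthogonal_comm : p.Orthogonal q ↔ q.Orthogonal p :=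
  ⟨Orthogonal.symm, Orthogonal.symm⟩

theorem orthogonal_iff_of_parts_eq_univ_left (hp : p.parts = {Finset.univ}) :
    p.Orthogonal q ↔ q.parts.card = n := by
  simp only [Orthogonal, meetingGraph_connected_of_parts_eq_univ q hp, hp, Finset.card_singleton,
    true_and]
  omega

theorem orthogonal_iff_of_parts_eq_univ_right (hq : q.parts = {Finset.univ}) :
    p.Orthogonal q ↔ p.parts.card = n :=
  orthogonal_comm.trans (orthogonal_iff_of_parts_eq_univ_left hq)

end Finpartition

namespace GenConn

variable (g : GenConn) {p q : Partition' g.arity}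

theorem orthSet_rules_dualRules : orthSet g.rules g.dualRules := fun p hp q hq => by
  rw [← g.orth] at hq
  exact hq p hp

theorem mem_rules_iff : p ∈ g.rules ↔ ∀ q ∈ g.dualRules, p.Orthogonal q := by
  rw [← g.orth']
  exact forall₂_congr fun _ _ => Finpartition.orthogonal_comm

variable {g}

theorem isParSet_of_mem_rules (hp : p ∈ g.rules) (hpu : p.parts = {Finset.univ}) :
    IsParSet g.rules := by
  have hdual : ∀ q ∈ g.dualRules, q.parts.card = g.arity := fun q hq =>
    (Finpartition.orthogonal_iff_of_parts_eq_univ_left hpu).1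
      (g.orthSet_rules_dualRules p hp q hq)
  obtain ⟨q₀, hq₀⟩ := g.dualRules_nonempty
  ext r
  rw [g.mem_rules_iff]
  refine ⟨fun hr => ?_, fun hr q hq => ?_⟩
  · have h₁ := (hr q₀ hq₀).2
    have h₂ := hdual q₀ hq₀
    exact Finpartition.parts_eq_singleton_of_card_parts_eq_one (by omega)
  · exact (Finpartition.orthogonal_iff_of_parts_eq_univ_left hr).2 (hdual q hq)

theorem isTensorSet_of_mem_dualRules (hq : q ∈ g.dualRules) (hqu : q.parts = {Finset.univ}) :
    IsTensorSet g.rules := by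
  have hdual : ∀ q' ∈ g.dualRules, q'.parts = {Finset.univ} := by
    obtain ⟨p₀, hp₀⟩ := g.rules_nonempty
    intro q' hq'
    have h₁ := (g.orthSet_rules_dualRules p₀ hp₀ q hq).2
    have h₂ := (g.orthSet_rules_dualRules p₀ hp₀ q' hq').2
    rw [hqu, Finset.card_singleton] at h₁
    exact Finpartition.parts_eq_singleton_of_card_parts_eq_one (by omega)
  ext r
  rw [g.mem_rules_iff, Set.mem_ofPred_eq, ← r.card_parts_eq_card_iff, Finset.card_univ,
    Fintype.card_fin]
  exact ⟨fun hr => (Finpartition.orthogonal_iff_of_parts_eq_univ_right hqu).1 (hr q hq),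
    fun hr q' hq' => (Finpartition.orthogonal_iff_of_parts_eq_univ_right (hdual q' hq')).2 hr⟩

end GenConn

section PhaseSpace

variable {M : Type*} [AddCommMonoid M] (Bot : Set M)

def pol (X : Set M) : Set M := upperPolar (fun a b => a + b ∈ Bot) X

variable {Bot} {X Y A B R R' : Set M}

theorem mem_pol {y : M} : y ∈ pol Bot X ↔ ∀ ⦃x⦄, x ∈ X → x + y ∈ Bot := Iff.rfl

theorem lowerPolar_eq_pol : lowerPolar (fun a b => a + b ∈ Bot) X = pol Bot X := by
  ext
  simp only [pol, mem_lowerPolar_iff, mem_upperPolar_iff, add_comm]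

theorem pol_anti : Antitone (pol Bot) := upperPolar_anti _

theorem subset_pol_pol (X : Set M) : X ⊆ pol Bot (pol Bot X) := by
  rw [← lowerPolar_eq_pol]
  exact subset_lowerPolar_upperPolar _ X

theorem pol_pol_pol (X : Set M) : pol Bot (pol Bot (pol Bot X)) = pol Bot X := by
  rw [pol, ← lowerPolar_eq_pol (X := pol Bot X), pol, upperPolar_lowerPolar_upperPolar]

theorem subset_pol_comm : X ⊆ pol Bot Y ↔ Y ⊆ pol Bot X := by
  rw [← lowerPolar_eq_pol, pol, subset_upperPolar_iff_subset_lowerPolar]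

theorem add_subset_iff_subset_pol : X + Y ⊆ Bot ↔ Y ⊆ pol Bot X :=
  ⟨fun h _ hy _ hx => h (Set.add_mem_add hx hy), by
    rintro h _ ⟨x, hx, y, hy, rfl⟩
    exact h hy hx⟩

theorem pol_pol_subset_pol (h : X ⊆ pol Bot Y) : pol Bot (pol Bot X) ⊆ pol Bot Y :=
  pol_pol_pol Y ▸ pol_anti (pol_anti h)

theorem pol_pol_add_subset :
    pol Bot (pol Bot X) + pol Bot (pol Bot Y) ⊆ pol Bot (pol Bot (X + Y)) := by
  rintro _ ⟨x, hx, y, hy, rfl⟩ z hz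
  have hzX : ∀ ⦃a⦄, a ∈ X → a + z ∈ pol Bot Y := fun a ha b hb => by
    simpa only [add_left_comm b, add_assoc] using hz (Set.add_mem_add ha hb)
  have hzy : z + y ∈ pol Bot X := fun a ha => by simpa only [add_assoc] using hy (hzX ha)
  simpa only [add_assoc, add_comm y, add_left_comm z] using hx hzy

theorem add_mem_pol_add {x y : M} (hx : x ∈ pol Bot (A + R)) (hy : y ∈ pol Bot (B + R'))
    (hAB : pol Bot A + pol Bot B ⊆ Bot) : x + y ∈ pol Bot (R + R') := by
  rintro _ ⟨r, hr, r', hr', rfl⟩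
  have hxr : r + x ∈ pol Bot A := fun a ha => by
    simpa only [add_assoc] using hx (Set.add_mem_add ha hr)
  have hyr : r' + y ∈ pol Bot B := fun b hb => by
    simpa only [add_assoc] using hy (Set.add_mem_add hb hr')
  simpa only [add_add_add_comm] using hAB (Set.add_mem_add hxr hyr)

end PhaseSpace

section Tree

variable {ι V : Type*}

def EdgeRel (K : Finset ι) (e : ι ⊕ ι → V) (a b : V) : Prop :=
  ∃ k ∈ K, s(e (.inl k), e (.inr k)) = s(a, b)

/-- The multigraph with vertices `W` and edges `K`, the edge `k` joining `e (.inl k)` and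
`e (.inr k)`, is connected and has one vertex more than edges: it is a tree. -/
structure IsTreeOn (K : Finset ι) (W : Finset V) (e : ι ⊕ ι → V) : Prop where
  card_eq : W.card = K.card + 1
  mem : ∀ h ∈ K.disjSum K, e h ∈ W
  connected : ∀ a ∈ W, ∀ b ∈ W, Relation.ReflTransGen (EdgeRel K e) a b

variable {K : Finset ι} {W : Finset V} {e : ι ⊕ ι → V}

theorem IsTreeOn.exists_ne (ht : IsTreeOn K W e) (hK : K.Nonempty) :
    ∃ k ∈ K, e (.inl k) ≠ e (.inr k) := by
  obtain ⟨a, ha, b, hb, hab⟩ := Finset.one_lt_card.1 <| by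
    rw [ht.card_eq]
    exact Nat.lt_add_of_pos_left hK.card_pos
  obtain ⟨c, d, ⟨k, hk, hkcd⟩, hcd⟩ := (ht.connected a ha b hb).exists_ne hab
  refine ⟨k, hk, fun h => hcd ?_⟩
  rw [h] at hkcd
  obtain ⟨h₁, h₂⟩ | ⟨h₁, h₂⟩ := Sym2.eq_iff.1 hkcd
  exacts [h₁.symm.trans h₂, h₂.symm.trans h₁]

variable [DecidableEq ι] [DecidableEq V]

theorem IsTreeOn.contract (ht : IsTreeOn K W e) {k : ι} (hk : k ∈ K) {v w : V}
    (hv : e (.inl k) = v) (hw : e (.inr k) = w) (hvw : v ≠ w) :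
    IsTreeOn (K.erase k) (W.erase w) (fun h => if e h = w then v else e h) := by
  have hvW : v ∈ W := hv ▸ ht.mem _ (Finset.inl_mem_disjSum.2 hk)
  have hwW : w ∈ W := hw ▸ ht.mem _ (Finset.inr_mem_disjSum.2 hk)
  refine ⟨?_, fun h hh => ?_, fun a ha b hb => ?_⟩
  · rw [Finset.card_erase_of_mem hwW, Finset.card_erase_of_mem hk, ht.card_eq]
    have := Finset.card_pos.2 ⟨k, hk⟩
    omega
  · have hh' := Finset.disjSum_mono (Finset.erase_subset _ _) (Finset.erase_subset _ _) hh
    split_ifs with hew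
    · exact Finset.mem_erase.2 ⟨hvw, hvW⟩
    · exact Finset.mem_erase.2 ⟨hew, ht.mem h hh'⟩
  · set f : V → V := fun u => if u = w then v else u
    have hfa : f a = a := if_neg (Finset.ne_of_mem_erase ha)
    have hfb : f b = b := if_neg (Finset.ne_of_mem_erase hb)
    rw [← hfa, ← hfb]
    refine Relation.ReflTransGen.lift' f ?_ _ _
      (ht.connected a (Finset.mem_of_mem_erase ha) b (Finset.mem_of_mem_erase hb))
    rintro c d ⟨k', hk', hcd⟩
    by_cases hkk : k' = k
    · subst hkk
      rw [hv, hw] at hcd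
      obtain ⟨rfl, rfl⟩ | ⟨rfl, rfl⟩ := Sym2.eq_iff.1 hcd <;>
        simp [f, Function.onFun, Relation.ReflTransGen.refl]
    · refine .single ⟨k', Finset.mem_erase.2 ⟨hkk, hk'⟩, ?_⟩
      simpa only [Sym2.map_mk] using congrArg (Sym2.map f) hcd

variable {N : Type*} [AddCommMonoid N] {k : ι} {v w : V}

theorem sum_filter_contract_eq_add (hv : e (.inl k) = v) (hw : e (.inr k) = w) (hvw : v ≠ w)
    (f : ι ⊕ ι → N) :
    ∑ h ∈ (K.erase k).disjSum (K.erase k) with (if e h = w then v else e h) = v, f h =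
      (∑ h ∈ (K.disjSum K).erase (.inl k) with e h = v, f h) +
        ∑ h ∈ (K.disjSum K).erase (.inr k) with e h = w, f h := by
  rw [← Finset.sum_union]
  · congr 1
    ext (h | h) <;>
      simp only [Finset.mem_filter, Finset.inl_mem_disjSum, Finset.inr_mem_disjSum,
        Finset.mem_erase, Finset.mem_union] <;>
      grind
  · exact Finset.disjoint_left.2 fun h h₁ h₂ =>
      hvw ((Finset.mem_filter.1 h₁).2.symm.trans (Finset.mem_filter.1 h₂).2)

theorem sum_filter_contract_eq_of_ne (hv : e (.inl k) = v) (hw : e (.inr k) = w) {u : V}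
    (huv : u ≠ v) (huw : u ≠ w) (f : ι ⊕ ι → N) :
    ∑ h ∈ (K.erase k).disjSum (K.erase k) with (if e h = w then v else e h) = u, f h =
      ∑ h ∈ K.disjSum K with e h = u, f h := by
  congr 1
  ext (h | h) <;>
    simp only [Finset.mem_filter, Finset.inl_mem_disjSum, Finset.inr_mem_disjSum,
      Finset.mem_erase] <;>
    grind

variable {M : Type*} [AddCommMonoid M] {Bot : Set M}

theorem IsTreeOn.sum_mem (ht : IsTreeOn K W e) {S : ι ⊕ ι → Set M}
    (hS : ∀ k ∈ K, pol Bot (S (.inl k)) + pol Bot (S (.inr k)) ⊆ Bot)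
    {x : V → M} (hx : ∀ v ∈ W, x v ∈ pol Bot (∑ h ∈ K.disjSum K with e h = v, S h)) :
    ∑ v ∈ W, x v ∈ Bot := by
  induction K using Finset.strongInduction generalizing W e x with
  | H K ih =>
    rcases K.eq_empty_or_nonempty with rfl | hK
    · obtain ⟨v, rfl⟩ := Finset.card_eq_one.1 ht.card_eq
      simpa using hx v (Finset.mem_singleton_self v) Set.zero_mem_zero
    -- Contract an edge `k` with distinct ends `v`, `w`: the constraints at `v` and `w` combine,
    -- through the cut on `k`, into the constraint at the merged vertex (`add_mem_pol_add`).
    obtain ⟨k, hk, hvw⟩ := ht.exists_ne hK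
    have hkl : .inl k ∈ K.disjSum K := Finset.inl_mem_disjSum.2 hk
    have hkr : .inr k ∈ K.disjSum K := Finset.inr_mem_disjSum.2 hk
    generalize hv : e (.inl k) = v at hvw
    generalize hw : e (.inr k) = w at hvw
    have hvW : v ∈ W := hv ▸ ht.mem _ hkl
    have hwW : w ∈ W := hw ▸ ht.mem _ hkr
    have hvW' : v ∈ W.erase w := Finset.mem_erase.2 ⟨hvw, hvW⟩
    have hsum : ∑ u ∈ W.erase w, Function.update x v (x v + x w) u = ∑ u ∈ W, x u := by
      rw [Finset.sum_update_of_mem hvW', ← Finset.add_sum_erase _ _ hwW,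
        ← Finset.add_sum_erase _ _ hvW', Finset.sdiff_singleton_eq_erase]
      abel
    rw [← hsum]
    refine ih _ (Finset.erase_ssubset hk) (ht.contract hk hv hw hvw)
      (fun k' hk' => hS k' (Finset.mem_of_mem_erase hk')) fun u hu => ?_
    rcases eq_or_ne u v with rfl | huv
    · rw [Function.update_self, sum_filter_contract_eq_add hv hw hvw]
      refine add_mem_pol_add ?_ ?_ (hS k hk)
      · simpa only [Finset.sum_filter_eq_add_sum_filter_erase hkl hv] using hx _ hvW
      · simpa only [Finset.sum_filter_eq_add_sum_filter_erase hkr hw] using hx _ hwW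
    · rw [Function.update_of_ne huv,
        sum_filter_contract_eq_of_ne hv hw huv (Finset.ne_of_mem_erase hu)]
      exact hx u (Finset.mem_of_mem_erase hu)

end Tree

namespace Finpartition

variable {n : ℕ} {p q : Partition' n}

theorem Orthogonal.isTreeOn (h : p.Orthogonal q) :
    IsTreeOn Finset.univ (p.parts.disjSum q.parts) (Sum.map p.part q.part) := by
  refine ⟨?_, ?_, ?_⟩
  · rw [Finset.card_disjSum, ← h.2, Finset.card_univ, Fintype.card_fin]
  · rintro (k | k) - <;> simp [part_mem]
  have hedge : ∀ a b, (meetingGraph p q).Adj a b →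
      EdgeRel Finset.univ (Sum.map p.part q.part)
        (Sum.map Subtype.val Subtype.val a) (Sum.map Subtype.val Subtype.val b) := by
    intro a b hab
    simp only [meetingGraph, SimpleGraph.fromRel_adj] at hab
    obtain ⟨-, ⟨c, d, ⟨k, hk⟩, rfl, rfl⟩ | ⟨c, d, ⟨k, hk⟩, rfl, rfl⟩⟩ := hab <;>
      rw [Finset.mem_inter] at hk <;>
      refine ⟨k, Finset.mem_univ k, ?_⟩ <;>
      simpa [Sym2.eq_swap] using ⟨p.part_eq_of_mem c.2 hk.1, q.part_eq_of_mem d.2 hk.2⟩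
  have hlift : ∀ a ∈ p.parts.disjSum q.parts, ∃ a' : {c // c ∈ p.parts} ⊕ {d // d ∈ q.parts},
      Sum.map Subtype.val Subtype.val a' = a := by
    rintro (c | d) hc
    exacts [⟨.inl ⟨c, by simpa using hc⟩, rfl⟩, ⟨.inr ⟨d, by simpa using hc⟩, rfl⟩]
  intro a ha b hb
  obtain ⟨a, rfl⟩ := hlift a ha
  obtain ⟨b, rfl⟩ := hlift b hb
  exact Relation.ReflTransGen.lift _ hedge _ _
    ((SimpleGraph.reachable_iff_reflTransGen _ _).1 (h.1.preconnected a b))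

variable {M : Type*} [AddCommMonoid M] {Bot : Set M}

theorem Orthogonal.sum_pol_add_sum_pol_subset (h : p.Orthogonal q) {S₁ S₂ : Fin n → Set M}
    (hS : ∀ k, pol Bot (S₁ k) + pol Bot (S₂ k) ⊆ Bot) :
    (∑ c ∈ p.parts, pol Bot (∑ k ∈ c, S₁ k)) + ∑ d ∈ q.parts, pol Bot (∑ k ∈ d, S₂ k) ⊆ Bot := by
  rintro _ ⟨_, hz, _, hw, rfl⟩
  obtain ⟨f, hf, rfl⟩ := (Set.mem_finsetSum _ _ _).1 hz
  obtain ⟨g, hg, rfl⟩ := (Set.mem_finsetSum _ _ _).1 hw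
  have := h.isTreeOn.sum_mem (S := Sum.elim S₁ S₂) (fun k _ => hS k) (x := Sum.elim f g) ?_
  · simpa [Finset.sum_disjSum] using this
  rintro (c | d) hv <;> rw [Finset.sum_filter, Finset.sum_disjSum]
  · have hc : c ∈ p.parts := Finset.inl_mem_disjSum.1 hv
    simpa [p.part_eq_iff_mem hc, Finset.sum_ite_mem] using hf hc
  · have hd : d ∈ q.parts := Finset.inr_mem_disjSum.1 hv
    simpa [q.part_eq_iff_mem hd, Finset.sum_ite_mem] using hg hd

end Finpartition

section ConnFact

variable {M : Type*} [AddCommMonoid M] (Bot : Set M) {n : ℕ}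

/-- The generator of the fact interpreting a connective with partition set `R` applied to
arguments interpreted by `X`: one summand per rule `p ∈ R`, one factor per premise. -/
def connFact (R : Set (Partition' n)) (X : Fin n → Set M) : Set M :=
  ⋃ p ∈ R, ∑ c ∈ p.parts, pol Bot (∑ k ∈ c, pol Bot (X k))

variable {Bot}

theorem connFact_add_connFact_subset {R R' : Set (Partition' n)} (hR : orthSet R R')
    {X Y : Fin n → Set M} (hXY : ∀ k, Y k ⊆ pol Bot (X k)) :
    connFact Bot R X + connFact Bot R' Y ⊆ Bot := by
  rintro _ ⟨x, hx, y, hy, rfl⟩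
  simp only [connFact, Set.mem_iUnion₂] at hx hy
  obtain ⟨p, hp, hx⟩ := hx
  obtain ⟨q, hq, hy⟩ := hy
  refine (hR p hp q hq).sum_pol_add_sum_pol_subset (fun k => ?_) (Set.add_mem_add hx hy)
  rw [add_subset_iff_subset_pol, pol_pol_pol]
  exact pol_pol_subset_pol (hXY k)

end ConnFact

section PhaseModel

variable {I : Type} {Csig : I → GenConn}

def pole : Set (Multiset (Formula I Csig)) := {Γ | Provable false Γ}

/-- Okada's interpretation: `A.interp` consists of contexts `Δ` such that `⊢ A, Δ` has a cut-free
proof (`Formula.interp_subset`), so that `{A} ∈ pol pole A.interp`. -/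
def Formula.interp : Formula I Csig → Set (Multiset (Formula I Csig))
  | .pos m => {Γ | Provable false (.pos m ::ₘ Γ)}
  | .neg m => pol pole {Γ | Provable false (.pos m ::ₘ Γ)}
  | .tens A B => pol pole (pol pole (A.interp + B.interp))
  | .parr A B => pol pole (pol pole A.interp + pol pole B.interp)
  | .conn i A => pol pole (pol pole (connFact pole (Csig i).rules fun k => (A k).interp))
  | .dconn i A => pol pole (pol pole (connFact pole (Csig i).dualRules fun k => (A k).interp))

def IsIntroRule (b : Bool) (Φ : Formula I Csig) {n : ℕ} (A : Fin n → Formula I Csig)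
    (p : Partition' n) : Prop :=
  ∀ Γ : {c // c ∈ p.parts} → Multiset (Formula I Csig),
    (∀ c, Provable b (Γ c + c.1.val.map A)) → Provable b (Φ ::ₘ ∑ c, Γ c)

theorem singleton_mem_pol_pole_iff {A : Formula I Csig} {X : Set (Multiset (Formula I Csig))} :
    {A} ∈ pol pole X ↔ X ⊆ {Γ | Provable false (A ::ₘ Γ)} := by
  simp only [mem_pol, pole, Set.subset_def, Set.mem_ofPred_eq, ← Multiset.singleton_add, add_comm]

theorem pol_pol_pole_subset_iff {A : Formula I Csig} {X : Set (Multiset (Formula I Csig))} :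
    pol pole (pol pole X) ⊆ {Γ | Provable false (A ::ₘ Γ)} ↔
      X ⊆ {Γ | Provable false (A ::ₘ Γ)} := by
  rw [← singleton_mem_pol_pole_iff, ← singleton_mem_pol_pole_iff, pol_pol_pol]

theorem connFact_subset_of_isIntroRule {n : ℕ} {R : Set (Partition' n)} {Φ : Formula I Csig}
    {A : Fin n → Formula I Csig} (hR : ∀ p ∈ R, IsIntroRule false Φ A p)
    (hA : ∀ k, {A k} ∈ pol pole (A k).interp) :
    connFact pole R (fun k => (A k).interp) ⊆ {Γ | Provable false (Φ ::ₘ Γ)} := by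
  intro z hz
  simp only [connFact, Set.mem_iUnion₂] at hz
  obtain ⟨p, hp, hz⟩ := hz
  obtain ⟨γ, hγ, rfl⟩ := (Set.mem_finsetSum _ _ _).1 hz
  rw [Set.mem_ofPred_eq, ← Finset.sum_coe_sort]
  refine hR p hp (fun c => γ c) fun c => ?_
  have hsum : ∑ k ∈ c.1, ({A k} : Multiset (Formula I Csig)) = c.1.val.map A := by
    simpa [Function.comp_def] using Multiset.sum_map_singleton (c.1.val.map A)
  have hAc : c.1.val.map A ∈ ∑ k ∈ c.1, pol pole (A k).interp :=
    hsum ▸ Set.finsetSum_mem_finsetSum _ _ _ fun k _ => hA k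
  rw [add_comm]
  exact hγ c.2 hAc

theorem Formula.interp_subset (A : Formula I Csig) :
    A.interp ⊆ {Γ | Provable false (A ::ₘ Γ)} := by
  induction A with
  | pos m => exact subset_rfl
  | neg m =>
    intro Δ hΔ
    simpa [pole] using hΔ (show {Formula.neg m} ∈ {Γ | Provable false (.pos m ::ₘ Γ)} from .ax m)
  | tens A B ihA ihB =>
    refine pol_pol_pole_subset_iff.2 ?_
    rintro _ ⟨Γ, hΓ, Δ, hΔ, rfl⟩
    exact .tens A B Γ Δ (ihA hΓ) (ihB hΔ)
  | parr A B ihA ihB =>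
    intro Δ hΔ
    refine .parr A B Δ ?_
    simpa [pole, Multiset.singleton_add] using
      hΔ (Set.add_mem_add (singleton_mem_pol_pole_iff.2 ihA) (singleton_mem_pol_pole_iff.2 ihB))
  | conn i A ih =>
    exact pol_pol_pole_subset_iff.2 (connFact_subset_of_isIntroRule
      (fun p hp => .conn i A p hp) fun k => singleton_mem_pol_pole_iff.2 (ih k))
  | dconn i A ih =>
    exact pol_pol_pole_subset_iff.2 (connFact_subset_of_isIntroRule
      (fun p hp => .dconn i A p hp) fun k => singleton_mem_pol_pole_iff.2 (ih k))

theorem Formula.interp_dual_subset (A : Formula I Csig) : A.dual.interp ⊆ pol pole A.interp := by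
  induction A with
  | pos m => exact subset_rfl
  | neg m => exact subset_pol_pol _
  | tens A B ihA ihB =>
    show pol pole _ ⊆ pol pole (pol pole (pol pole _))
    rw [pol_pol_pol]
    exact pol_anti (Set.add_subset_add (subset_pol_comm.1 ihA) (subset_pol_comm.1 ihB))
  | parr A B ihA ihB => exact pol_anti (pol_anti (Set.add_subset_add ihA ihB))
  | conn i A ih =>
    show pol pole (pol pole _) ⊆ pol pole (pol pole (pol pole _))
    rw [pol_pol_pol]
    refine pol_pol_subset_pol ?_
    rw [← add_subset_iff_subset_pol]
    exact connFact_add_connFact_subset (Csig i).orthSet_rules_dualRules ih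
  | dconn i A ih =>
    show pol pole (pol pole _) ⊆ pol pole (pol pole (pol pole _))
    rw [pol_pol_pol]
    refine pol_pol_subset_pol ?_
    rw [subset_pol_comm, ← add_subset_iff_subset_pol]
    exact connFact_add_connFact_subset (Csig i).orthSet_rules_dualRules
      fun k => subset_pol_comm.1 (ih k)

def sequentInterp : Multiset (Formula I Csig) →+ Set (Multiset (Formula I Csig)) :=
  Multiset.sumAddMonoidHom.comp (Multiset.mapAddMonoidHom fun F => pol pole F.interp)

theorem sequentInterp_cons (F : Formula I Csig) (Γ : Multiset (Formula I Csig)) :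
    sequentInterp (F ::ₘ Γ) = pol pole F.interp + sequentInterp Γ := by
  simp [sequentInterp]

theorem sequentInterp_cons_subset_iff {F : Formula I Csig} {Γ : Multiset (Formula I Csig)} :
    sequentInterp (F ::ₘ Γ) ⊆ pole ↔ sequentInterp Γ ⊆ pol pole (pol pole F.interp) := by
  rw [sequentInterp_cons, add_subset_iff_subset_pol]

theorem sequentInterp_map_val {n : ℕ} (c : Finset (Fin n)) (A : Fin n → Formula I Csig) :
    sequentInterp (c.val.map A) = ∑ k ∈ c, pol pole (A k).interp := by
  simp only [sequentInterp, AddMonoidHom.coe_comp, Function.comp_apply,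
    Multiset.coe_mapAddMonoidHom, Multiset.coe_sumAddMonoidHom, Multiset.map_map]
  rfl

theorem mem_sequentInterp_self (Γ : Multiset (Formula I Csig)) : Γ ∈ sequentInterp Γ := by
  simpa [sequentInterp, Multiset.map_map, Function.comp_def] using
    Set.multiset_sum_mem_multiset_sum Γ (fun F => pol pole F.interp) (fun F => {F})
      fun F _ => singleton_mem_pol_pole_iff.2 F.interp_subset

theorem sequentInterp_sum_subset_connFact {n : ℕ} {R : Set (Partition' n)} {p : Partition' n}
    (hp : p ∈ R) (A : Fin n → Formula I Csig) {Γ : {c // c ∈ p.parts} → Multiset (Formula I Csig)}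
    (hΓ : ∀ c, sequentInterp (Γ c + c.1.val.map A) ⊆ pole) :
    sequentInterp (∑ c, Γ c) ⊆ connFact pole R fun k => (A k).interp := by
  intro z hz
  simp only [connFact, Set.mem_iUnion₂]
  refine ⟨p, hp, ?_⟩
  rw [map_sum] at hz
  rw [← Finset.sum_coe_sort p.parts]
  refine Set.finsetSum_subset_finsetSum _ _ _ (fun c _ => ?_) hz
  have h := hΓ c
  rw [map_add, add_comm, add_subset_iff_subset_pol, sequentInterp_map_val] at h
  exact h

theorem Provable.sequentInterp_subset {b : Bool} {Γ : Multiset (Formula I Csig)}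
    (h : Provable b Γ) : sequentInterp Γ ⊆ pole := by
  induction h with
  | ax m =>
    rw [Multiset.insert_eq_cons, sequentInterp_cons_subset_iff, ← Multiset.cons_zero,
      sequentInterp_cons, map_zero, add_zero]
    exact subset_rfl
  | cut A Γ Δ _ _ _ ihΓ ihΔ =>
    rw [sequentInterp_cons_subset_iff] at ihΓ ihΔ
    rw [map_add]
    refine (Set.add_subset_add ihΓ ihΔ).trans ?_
    rw [add_subset_iff_subset_pol, pol_pol_pol]
    exact pol_pol_subset_pol A.interp_dual_subset
  | tens A B Γ Δ _ _ ihΓ ihΔ =>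
    rw [sequentInterp_cons_subset_iff] at ihΓ ihΔ ⊢
    rw [map_add]
    exact (Set.add_subset_add ihΓ ihΔ).trans (pol_pol_add_subset.trans (subset_pol_pol _))
  | parr A B Γ _ ih =>
    rw [sequentInterp_cons, sequentInterp_cons, ← add_assoc, add_subset_iff_subset_pol] at ih
    rw [sequentInterp_cons_subset_iff]
    exact ih.trans (subset_pol_pol _)
  | conn i A p hp Γ _ ih =>
    rw [sequentInterp_cons_subset_iff]
    exact (sequentInterp_sum_subset_connFact hp A ih).trans
      ((subset_pol_pol _).trans (subset_pol_pol _))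
  | dconn i A p hp Γ _ ih =>
    rw [sequentInterp_cons_subset_iff]
    exact (sequentInterp_sum_subset_connFact hp A ih).trans
      ((subset_pol_pol _).trans (subset_pol_pol _))

theorem Provable.cutFree {b : Bool} {Γ : Multiset (Formula I Csig)} (h : Provable b Γ) :
    Provable false Γ :=
  h.sequentInterp_subset (mem_sequentInterp_self Γ)

end PhaseModel

section CutFreeProofs

variable {I : Type} {Csig : I → GenConn}

theorem Provable.exists_ne_pos_and_exists_ne_neg {Γ : Multiset (Formula I Csig)}
    (h : Provable false Γ) : (∃ F ∈ Γ, ∀ m, F ≠ .pos m) ∧ ∃ F ∈ Γ, ∀ m, F ≠ .neg m := by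
  cases h with
  | ax m => exact ⟨⟨.neg m, by simp, by simp⟩, ⟨.pos m, by simp, by simp⟩⟩
  | cut _ _ _ hcut => cases hcut
  | tens | parr | conn | dconn =>
    exact ⟨⟨_, Multiset.mem_cons_self _ _, by simp⟩, ⟨_, Multiset.mem_cons_self _ _, by simp⟩⟩

theorem not_provable_map_pos (s : Multiset ℕ) :
    ¬ Provable false (s.map (Formula.pos (I := I) (Csig := Csig))) := fun h => by
  obtain ⟨F, hF, hne⟩ := h.exists_ne_pos_and_exists_ne_neg.1
  obtain ⟨m, -, rfl⟩ := Multiset.mem_map.1 hF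
  exact hne m rfl

theorem not_provable_map_neg (s : Multiset ℕ) :
    ¬ Provable false (s.map (Formula.neg (I := I) (Csig := Csig))) := fun h => by
  obtain ⟨F, hF, hne⟩ := h.exists_ne_pos_and_exists_ne_neg.2
  obtain ⟨m, -, rfl⟩ := Multiset.mem_map.1 hF
  exact hne m rfl

theorem card_parts_eq_one_of_provable {n : ℕ} {p : Partition' n} {A : Fin n → Formula I Csig}
    {Γ : {c // c ∈ p.parts} → Multiset (Formula I Csig)} {F : Formula I Csig}
    (hΓ : ∑ c, Γ c = {F}) (hprem : ∀ c, Provable false (Γ c + c.1.val.map A))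
    (hA : ∀ s : Multiset (Fin n), ¬ Provable false (s.map A)) : p.parts.card = 1 := by
  rw [← Fintype.card_coe]
  refine Fintype.card_eq_one_of_sum_eq_singleton hΓ fun c h0 => hA c.1.val ?_
  simpa [h0] using hprem c

end CutFreeProofs

section ExcludedMiddle

variable {I : Type} {Csig : I → GenConn} {b : Bool} {n : ℕ}

theorem IsIntroRule.provable_cons_map_of_card_eq_one {Φ : Formula I Csig}
    {A B : Fin n → Formula I Csig} {p : Partition' n} (hrule : IsIntroRule b Φ A p)
    (hp : ∀ c ∈ p.parts, c.card = 1) (hax : ∀ k, Provable b {B k, A k}) :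
    Provable b (Φ ::ₘ Finset.univ.val.map B) := by
  have h := hrule (fun c => c.1.val.map B) fun c => by
    obtain ⟨k, hk⟩ := Finset.card_eq_one.1 (hp c c.2)
    simpa [hk] using hax k
  rwa [p.sum_map_val_parts] at h

theorem IsIntroRule.provable_pair_of_parts_eq_univ {Φ Ψ : Formula I Csig}
    {A : Fin n → Formula I Csig} {p : Partition' n} (hrule : IsIntroRule b Φ A p)
    (hp : p.parts = {Finset.univ}) (h : Provable b (Ψ ::ₘ Finset.univ.val.map A)) :
    Provable b {Φ, Ψ} := by
  have h' := hrule (fun _ => {Ψ}) fun c => by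
    rw [show c.1 = Finset.univ by simpa [hp] using c.2]
    simpa using h
  simpa [hp] using h'

variable (g : GenConn) (a : Fin g.arity → ℕ)

theorem provable_of_isParSet (h : IsParSet g.rules) :
    Provable (I := Unit) (Csig := fun _ => g) true
      {Formula.conn () (fun k => .pos (a k)), Formula.dconn () (fun k => .neg (a k))} := by
  obtain ⟨p, hp⟩ := g.rules_nonempty
  obtain ⟨q, hq⟩ := g.dualRules_nonempty
  have hpu : p.parts = {Finset.univ} := by rw [h] at hp; exact hp
  have hq1 : ∀ c ∈ q.parts, c.card = 1 := by
    rw [← q.card_parts_eq_card_iff, Finset.card_univ, Fintype.card_fin]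
    exact (Finpartition.orthogonal_iff_of_parts_eq_univ_left hpu).1
      (g.orthSet_rules_dualRules p hp q hq)
  refine IsIntroRule.provable_pair_of_parts_eq_univ (.conn (Csig := fun _ => g) () _ p hp) hpu ?_
  exact IsIntroRule.provable_cons_map_of_card_eq_one (.dconn (Csig := fun _ => g) () _ q hq) hq1
    fun k => .ax (a k)

theorem provable_of_isTensorSet (h : IsTensorSet g.rules) :
    Provable (I := Unit) (Csig := fun _ => g) true
      {Formula.conn () (fun k => .pos (a k)), Formula.dconn () (fun k => .neg (a k))} := by
  obtain ⟨p, hp⟩ := g.rules_nonempty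
  obtain ⟨q, hq⟩ := g.dualRules_nonempty
  have hp1 : ∀ c ∈ p.parts, c.card = 1 := by rw [h] at hp; exact hp
  have hqu : q.parts = {Finset.univ} := by
    refine Finpartition.parts_eq_singleton_of_card_parts_eq_one ?_
    have := (g.orthSet_rules_dualRules p hp q hq).2
    rw [p.card_parts_eq_card_iff.2 hp1, Finset.card_univ, Fintype.card_fin] at this
    omega
  rw [Multiset.pair_comm]
  refine IsIntroRule.provable_pair_of_parts_eq_univ (.dconn (Csig := fun _ => g) () _ q hq) hqu ?_
  refine IsIntroRule.provable_cons_map_of_card_eq_one (.conn (Csig := fun _ => g) () _ p hp) hp1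
    fun k => ?_
  rw [Multiset.pair_comm]
  exact .ax (a k)

theorem isTensorSet_or_isParSet_of_provable_false
    (h : Provable (I := Unit) (Csig := fun _ => g) false
      {Formula.conn () (fun k => .pos (a k)), Formula.dconn () (fun k => .neg (a k))}) :
    IsTensorSet g.rules ∨ IsParSet g.rules := by
  generalize hΓ : ({Formula.conn () (fun k => .pos (a k)),
    Formula.dconn () (fun k => .neg (a k))} : Multiset (Formula Unit fun _ => g)) = Γ at h
  cases h with
  | ax m => simp [Multiset.insert_eq_cons, Multiset.cons_eq_cons] at hΓ
  | cut _ _ _ hcut => cases hcut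
  | tens => simp [Multiset.insert_eq_cons, Multiset.cons_eq_cons] at hΓ
  | parr => simp [Multiset.insert_eq_cons, Multiset.cons_eq_cons] at hΓ
  | conn _ A p hp Γ hprem =>
    obtain ⟨rfl, hsum⟩ :
        (fun k => .pos (a k)) = A ∧ {.dconn () fun k => .neg (a k)} = ∑ c, Γ c := by
      simpa [Multiset.insert_eq_cons, Multiset.cons_eq_cons, -Finset.univ_eq_attach] using hΓ
    refine .inr (g.isParSet_of_mem_rules hp
      (Finpartition.parts_eq_singleton_of_card_parts_eq_one ?_))
    exact card_parts_eq_one_of_provable hsum.symm hprem fun s => by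
      simpa [Multiset.map_map, Function.comp_def] using not_provable_map_pos (s.map a)
  | dconn _ A q hq Γ hprem =>
    obtain ⟨rfl, hsum⟩ :
        (fun k => .neg (a k)) = A ∧ ∑ c, Γ c = {.conn () fun k => .pos (a k)} := by
      simpa [Multiset.insert_eq_cons, Multiset.cons_eq_cons, -Finset.univ_eq_attach] using hΓ
    refine .inl (g.isTensorSet_of_mem_dualRules hq
      (Finpartition.parts_eq_singleton_of_card_parts_eq_one ?_))
    exact card_parts_eq_one_of_provable hsum hprem fun s => by
      simpa [Multiset.map_map, Function.comp_def] using not_provable_map_neg (s.map a)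

end ExcludedMiddle

theorem excluded_middle_provable_iff_tensor_or_par_general
    (g : GenConn) (a : Fin g.arity → ℕ) :
    Provable (I := Unit) (Csig := fun _ => g) true
      {Formula.conn () (fun k => Formula.pos (a k)),
       Formula.dconn () (fun k => Formula.neg (a k))} ↔
    (IsTensorSet g.rules ∨ IsParSet g.rules) :=
  ⟨fun h => isTensorSet_or_isParSet_of_provable_false g a h.cutFree,
    fun h => h.elim (provable_of_isTensorSet g a) (provable_of_isParSet g a)⟩

/-- **Provability of the "excluded middle" sequent characterizes `⊗ⁿ`/`⅋ⁿ`:**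
for any dual pair `(C, C*)` of `n`-ary generalized connectives and (distinct) atoms
`A₁,…,Aₙ`, the sequent `⊢ C(A₁,…,Aₙ), C*(~A₁,…,~Aₙ)` is provable in `MLL(C, C*)` if and
only if `C = ⊗ⁿ` (i.e. `P_C` is the partition set consisting of the partition of
`{1,…,n}` into singletons) or `C = ⅋ⁿ` (i.e. `P_C` is the partition set consisting of the
one-class partition). -/
theorem excluded_middle_provable_iff_tensor_or_par
    (g : GenConn) (a : Fin g.arity → ℕ) (ha : Function.Injective a) :
    Provable (I := Unit) (Csig := fun _ => g) true
      {Formula.conn () (fun k => Formula.pos (a k)),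
       Formula.dconn () (fun k => Formula.neg (a k))} ↔
    (IsTensorSet g.rules ∨ IsParSet g.rules) :=
  excluded_middle_provable_iff_tensor_or_par_general g a
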